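/- arXiv:2603.20761 — 2 statements merged into one kernel-verified Lean document; each statement's English description precedes it below -/
import Mathlib

section
/- Let V be an isometry defining an irreducible quantum Markov chain with system dimension d and environment dimension k, with stationary state ρˢˢ, and let ρˢˢ = Σ_{m=1}^{d} π_m φ_m φ_mᴴ be a spectral decomposition with (φ_m) an orthonormal basis of ℂ^d and π_m ≥ 0. For each n define the vectors ψ_{mp}(n) ∈ ℂ^{kⁿ} with components ψ_{mp}(n)_i = ⟨φ_m, K_i φ_p⟩ for words i of length n. Then: (a) the stationary output state satisfies ρ_V^out(n) = Σ_{m,p=1}^{d} π_p ψ_{mp}(n) ψ_{mp}(n)ᴴ; (b) for every n, the rank of ρ_V^out(n) is at most d², and consequently tr((ρ_V^out(n))²) ≥ d^{−2}. -/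
/-!
Writing `ρˢˢ = Σ_p π_p φ_p φ_pᴴ`, the `(i, j)` entry of `ρ_V^out(n)` is
`Σ_p π_p ⟨K_j φ_p, K_i φ_p⟩`, and expanding each inner product in the orthonormal basis `(φ_m)`
(Parseval) turns it into `Σ_{m,p} π_p ψ_{mp}(n)_i conj(ψ_{mp}(n)_j)`. This is (a), and exhibits
`ρ_V^out(n)` as a sum of `d²` rank-one matrices, whence the rank bound. Stationarity of `ρˢˢ`
gives `tr ρ_V^out(n) = 1`, and for a Hermitian matrix `A` Cauchy–Schwarz over its nonzero
eigenvalues gives `(tr A)² ≤ rank A · tr A²`, which yields the purity bound.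
-/

open Matrix Filter
open scoped Kronecker ComplexConjugate ComplexOrder

noncomputable section

namespace QMCPaper

/-- The `j`-th block (Kraus operator style) of a `(d₁·k)×d₂` matrix. -/
def blk {d₁ d₂ k : ℕ} (V : Matrix (Fin d₁ × Fin k) (Fin d₂) ℂ) (j : Fin k) :
    Matrix (Fin d₁) (Fin d₂) ℂ :=
  fun a b => V (a, j) b

/-- The Kraus operators of a QMC isometry. -/
def kraus {d k : ℕ} (V : Matrix (Fin d × Fin k) (Fin d) ℂ) (j : Fin k) :
    Matrix (Fin d) (Fin d) ℂ :=
  blk V j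

/-- The transition channel `T_V(X) = Vᴴ (X ⊗ 1_k) V = Σ_j K_jᴴ X K_j`. -/
def chan {d k : ℕ} (V : Matrix (Fin d × Fin k) (Fin d) ℂ)
    (X : Matrix (Fin d) (Fin d) ℂ) : Matrix (Fin d) (Fin d) ℂ :=
  ∑ j : Fin k, (kraus V j)ᴴ * X * kraus V j

/-- The predual channel `T_{V*}(ρ) = Σ_j K_j ρ K_jᴴ`. -/
def predual {d k : ℕ} (V : Matrix (Fin d × Fin k) (Fin d) ℂ)
    (ρ : Matrix (Fin d) (Fin d) ℂ) : Matrix (Fin d) (Fin d) ℂ :=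
  ∑ j : Fin k, kraus V j * ρ * (kraus V j)ᴴ

/-- A state: positive semidefinite matrix of trace one. -/
def IsState {d : ℕ} (ρ : Matrix (Fin d) (Fin d) ℂ) : Prop :=
  ρ.PosSemidef ∧ ρ.trace = 1

/-- `V` is an isometry defining an irreducible QMC with (unique, faithful) stationary
state `ρss`. -/
def IsIrreducible {d k : ℕ} (V : Matrix (Fin d × Fin k) (Fin d) ℂ)
    (ρss : Matrix (Fin d) (Fin d) ℂ) : Prop :=
  Vᴴ * V = 1 ∧ IsState ρss ∧ predual V ρss = ρss ∧ ρss.PosDef ∧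
    ∀ ρ, IsState ρ → predual V ρ = ρ → ρ = ρss

/-- For a word `i = (i_0, …, i_{n-1})`, the operator `K_i = K_{i_{n-1}} ⋯ K_{i_0}`. -/
def krausWord {d k : ℕ} (V : Matrix (Fin d × Fin k) (Fin d) ℂ) {n : ℕ}
    (i : Fin n → Fin k) : Matrix (Fin d) (Fin d) ℂ :=
  ((List.ofFn i).reverse.map (kraus V)).prod

/-- The output state at time `n` with initial system state `ρ`:
its `(i,j)` entry is `tr(K_i ρ K_jᴴ)`. -/
def outState {d k : ℕ} (V : Matrix (Fin d × Fin k) (Fin d) ℂ)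
    (ρ : Matrix (Fin d) (Fin d) ℂ) (n : ℕ) :
    Matrix (Fin n → Fin k) (Fin n → Fin k) ℂ :=
  fun i j => (krausWord V i * ρ * (krausWord V j)ᴴ).trace

/-- Output equivalence (with given initial states): equality of all output states. -/
def OutputEquiv {d₁ d₂ k : ℕ}
    (V₁ : Matrix (Fin d₁ × Fin k) (Fin d₁) ℂ) (ρ₁ : Matrix (Fin d₁) (Fin d₁) ℂ)
    (V₂ : Matrix (Fin d₂ × Fin k) (Fin d₂) ℂ) (ρ₂ : Matrix (Fin d₂) (Fin d₂) ℂ) : Prop :=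
  ∀ n : ℕ, 1 ≤ n → ∀ i j : Fin n → Fin k,
    (krausWord V₁ i * ρ₁ * (krausWord V₁ j)ᴴ).trace =
      (krausWord V₂ i * ρ₂ * (krausWord V₂ j)ᴴ).trace

/-- A (possibly rectangular) unitary matrix. -/
def IsUnitaryMat {d₁ d₂ : ℕ} (W : Matrix (Fin d₁) (Fin d₂) ℂ) : Prop :=
  Wᴴ * W = 1 ∧ W * Wᴴ = 1

end QMCPaper

namespace QMCPaper

/-- The vector `ψ_{mp}(n) ∈ ℂ^{kⁿ}` with components `⟨φ_m, K_i φ_p⟩`. -/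
def psiVec {d k : ℕ} (V : Matrix (Fin d × Fin k) (Fin d) ℂ)
    (φ : Fin d → Fin d → ℂ) (n : ℕ) (m p : Fin d) : (Fin n → Fin k) → ℂ :=
  fun i => star (φ m) ⬝ᵥ (krausWord V i *ᵥ φ p)

end QMCPaper

namespace Matrix

section Rank

variable {R m n κ : Type*} [CommRing R] [StrongRankCondition R] [Fintype n] [Fintype κ]

lemma rank_sum_vecMulVec_le (w : κ → m → R) (v : κ → n → R) :
    (∑ α, vecMulVec (w α) (v α)).rank ≤ Fintype.card κ := by
  have hfactor : ∑ α, vecMulVec (w α) (v α) = of (fun i α => w α i) * of (fun α j => v α j) := by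
    ext i j
    simp [sum_apply, vecMulVec_apply, mul_apply]
  rw [hfactor]
  exact (rank_mul_le_left _ _).trans (rank_le_card_width _)

end Rank

section Orthonormal

variable {R n : Type*} [CommRing R] [StarRing R] [Fintype n] [DecidableEq n]

lemma sum_vecMulVec_star_eq_one_of_orthonormal {φ : n → n → R}
    (hφ : ∀ m p, star (φ m) ⬝ᵥ φ p = if m = p then (1 : R) else 0) :
    ∑ m, vecMulVec (φ m) (star (φ m)) = 1 := by
  set U : Matrix n n R := of fun a m => φ m a
  have hUU : Uᴴ * U = 1 := by
    ext m p
    simpa [U, mul_apply, one_apply, dotProduct] using hφ m p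
  rw [← mul_eq_one_comm.mp hUU]
  ext a b
  simp [U, sum_apply, vecMulVec_apply, mul_apply]

lemma star_dotProduct_eq_sum_of_orthonormal {φ : n → n → R}
    (hφ : ∀ m p, star (φ m) ⬝ᵥ φ p = if m = p then (1 : R) else 0) (x y : n → R) :
    star y ⬝ᵥ x = ∑ m, (star (φ m) ⬝ᵥ x) * star (star (φ m) ⬝ᵥ y) := by
  conv_lhs => rw [← one_mulVec x, ← sum_vecMulVec_star_eq_one_of_orthonormal hφ]
  rw [sum_mulVec, dotProduct_sum]
  refine Finset.sum_congr rfl fun m _ => ?_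
  rw [vecMulVec_mulVec, dotProduct_smul, op_smul_eq_mul, star_dotProduct y, mul_comm]

end Orthonormal

lemma trace_mul_vecMulVec_star_mul_conjTranspose {R n : Type*} [CommRing R] [StarRing R]
    [Fintype n] (A B : Matrix n n R) (u : n → R) :
    (A * vecMulVec u (star u) * Bᴴ).trace = star (B *ᵥ u) ⬝ᵥ (A *ᵥ u) := by
  rw [mul_vecMulVec, vecMulVec_mul, trace_vecMulVec, ← star_mulVec, dotProduct_comm]

section Hermitian

variable {𝕜 n : Type*} [RCLike 𝕜] [Fintype n] [DecidableEq n] {A : Matrix n n 𝕜}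

lemma IsHermitian.trace_mul_self_eq_sum_eigenvalues_sq (hA : A.IsHermitian) :
    (A * A).trace = ∑ i, ((hA.eigenvalues i ^ 2 : ℝ) : 𝕜) := by
  conv_lhs => rw [hA.spectral_theorem, ← map_mul, Unitary.conjStarAlgAut_apply, trace_mul_cycle,
    Unitary.coe_star_mul_self, one_mul, diagonal_mul_diagonal, trace_diagonal]
  simp [sq]

lemma IsHermitian.re_trace_sq_le_rank_mul_re_trace_mul_self (hA : A.IsHermitian) :
    RCLike.re A.trace ^ 2 ≤ A.rank * RCLike.re (A * A).trace := by
  classical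
  set s := Finset.univ.filter fun i => hA.eigenvalues i ≠ 0
  have hrank : A.rank = s.card := by
    rw [hA.rank_eq_card_non_zero_eigs, Fintype.card_subtype]
  have htrace : RCLike.re A.trace = ∑ i ∈ s, hA.eigenvalues i := by
    rw [hA.trace_eq_sum_eigenvalues, Finset.sum_filter_ne_zero]
    simp
  rw [hrank, htrace, hA.trace_mul_self_eq_sum_eigenvalues_sq]
  calc (∑ i ∈ s, hA.eigenvalues i) ^ 2 ≤ s.card * ∑ i ∈ s, hA.eigenvalues i ^ 2 :=
        sq_sum_le_card_mul_sum_sq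
    _ ≤ s.card * ∑ i, hA.eigenvalues i ^ 2 := by
        gcongr
        exact s.subset_univ
    _ = _ := by simp

end Hermitian

end Matrix

namespace QMCPaper

section OutState

variable {d k : ℕ} (V : Matrix (Fin d × Fin k) (Fin d) ℂ)

lemma krausWord_cons {n : ℕ} (a : Fin k) (t : Fin n → Fin k) :
    krausWord V (Fin.cons a t) = krausWord V t * kraus V a := by
  simp [krausWord, List.ofFn_succ, Fin.cons_succ]

lemma sum_krausWord_mul_mul_conjTranspose (n : ℕ) (ρ : Matrix (Fin d) (Fin d) ℂ) :
    ∑ i : Fin n → Fin k, krausWord V i * ρ * (krausWord V i)ᴴ = (predual V)^[n] ρ := by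
  induction n generalizing ρ with
  | zero => simp [krausWord]
  | succ n ih =>
    rw [Function.iterate_succ_apply, ← ih, ← Fintype.sum_equiv (Fin.consEquiv fun _ => Fin k)
      (fun p => krausWord V (Fin.cons p.1 p.2) * ρ * (krausWord V (Fin.cons p.1 p.2))ᴴ) _
      fun _ => rfl, Fintype.sum_prod_type, Finset.sum_comm]
    refine Finset.sum_congr rfl fun t _ => ?_
    simp only [krausWord_cons, conjTranspose_mul, predual, Finset.mul_sum, Finset.sum_mul,
      Matrix.mul_assoc]

lemma trace_outState (ρ : Matrix (Fin d) (Fin d) ℂ) (n : ℕ) :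
    (outState V ρ n).trace = ((predual V)^[n] ρ).trace := by
  rw [← sum_krausWord_mul_mul_conjTranspose, trace_sum]
  rfl

lemma outState_isHermitian {ρ : Matrix (Fin d) (Fin d) ℂ} (hρ : ρ.IsHermitian) (n : ℕ) :
    (outState V ρ n).IsHermitian := by
  ext i j
  simp only [conjTranspose_apply, outState, ← trace_conjTranspose, conjTranspose_mul,
    conjTranspose_conjTranspose, hρ.eq, Matrix.mul_assoc]

lemma outState_sum_smul {ι : Type*} (s : Finset ι) (c : ι → ℂ)
    (ρ : ι → Matrix (Fin d) (Fin d) ℂ) (n : ℕ) :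
    outState V (∑ p ∈ s, c p • ρ p) n = ∑ p ∈ s, c p • outState V (ρ p) n := by
  ext i j
  simp [outState, Finset.mul_sum, Finset.sum_mul, trace_sum, Matrix.sum_apply]

lemma outState_vecMulVec_star_eq_sum_psiVec {φ : Fin d → Fin d → ℂ}
    (hφ : ∀ m p, star (φ m) ⬝ᵥ φ p = if m = p then (1 : ℂ) else 0) (n : ℕ) (p : Fin d) :
    outState V (vecMulVec (φ p) (star (φ p))) n =
      ∑ m, vecMulVec (psiVec V φ n m p) (star (psiVec V φ n m p)) := by
  ext i j
  rw [outState, trace_mul_vecMulVec_star_mul_conjTranspose,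
    star_dotProduct_eq_sum_of_orthonormal hφ]
  simp [Matrix.sum_apply, vecMulVec_apply, psiVec]

end OutState

theorem outState_structure_general {d k : ℕ}
    (V : Matrix (Fin d × Fin k) (Fin d) ℂ) (ρss : Matrix (Fin d) (Fin d) ℂ)
    (h : IsIrreducible V ρss)
    (π : Fin d → ℝ) (φ : Fin d → Fin d → ℂ)
    (hon : ∀ m p, star (φ m) ⬝ᵥ φ p = if m = p then (1 : ℂ) else 0)
    (hdecomp : ρss = ∑ m, (π m : ℂ) • Matrix.vecMulVec (φ m) (star (φ m))) :
    (∀ n : ℕ, outState V ρss n =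
        ∑ m, ∑ p, (π p : ℂ) •
          Matrix.vecMulVec (psiVec V φ n m p) (star (psiVec V φ n m p))) ∧
    (∀ n : ℕ, (outState V ρss n).rank ≤ d ^ 2) ∧
    (∀ n : ℕ, ((d : ℝ) ^ 2)⁻¹ ≤ ((outState V ρss n * outState V ρss n).trace).re) := by
  obtain ⟨-, ⟨hρss, htrace⟩, hfixed, -, -⟩ := h
  have hstructure : ∀ n, outState V ρss n = ∑ m, ∑ p, (π p : ℂ) •
      vecMulVec (psiVec V φ n m p) (star (psiVec V φ n m p)) := fun n => by
    simp_rw [hdecomp, outState_sum_smul, outState_vecMulVec_star_eq_sum_psiVec V hon,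
      Finset.smul_sum]
    exact Finset.sum_comm
  have hrank : ∀ n, (outState V ρss n).rank ≤ d ^ 2 := fun n => by
    simp_rw [hstructure, ← smul_vecMulVec, ← Fintype.sum_prod_type']
    calc _ ≤ Fintype.card (Fin d × Fin d) := rank_sum_vecMulVec_le _ _
      _ = d ^ 2 := by rw [Fintype.card_prod, Fintype.card_fin, sq]
  refine ⟨hstructure, hrank, fun n => ?_⟩
  have htrace_out : (outState V ρss n).trace = 1 := by
    rw [trace_outState, Function.iterate_fixed hfixed, htrace]
  have hpurity :=
    (outState_isHermitian V hρss.isHermitian n).re_trace_sq_le_rank_mul_re_trace_mul_self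
  simp only [htrace_out, RCLike.one_re, one_pow, RCLike.re_to_complex] at hpurity
  set purity := ((outState V ρss n * outState V ρss n).trace).re
  have hrank_real : ((outState V ρss n).rank : ℝ) ≤ (d : ℝ) ^ 2 := by exact_mod_cast hrank n
  have hpos : 0 < purity := by nlinarith [Nat.cast_nonneg (α := ℝ) (outState V ρss n).rank]
  have hle : 1 ≤ (d : ℝ) ^ 2 * purity := by nlinarith
  have hd : 0 < (d : ℝ) ^ 2 := by nlinarith
  exact (inv_le_iff_one_le_mul₀' hd).2 hle

/-- Lemma: structure of the stationary output state. -/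
theorem outState_structure {d k : ℕ}
    (V : Matrix (Fin d × Fin k) (Fin d) ℂ) (ρss : Matrix (Fin d) (Fin d) ℂ)
    (h : IsIrreducible V ρss)
    (π : Fin d → ℝ) (φ : Fin d → Fin d → ℂ)
    (hπ : ∀ m, 0 ≤ π m)
    (hon : ∀ m p, star (φ m) ⬝ᵥ φ p = if m = p then (1 : ℂ) else 0)
    (hdecomp : ρss = ∑ m, (π m : ℂ) • Matrix.vecMulVec (φ m) (star (φ m))) :
    (∀ n : ℕ, outState V ρss n =
        ∑ m, ∑ p, (π p : ℂ) •
          Matrix.vecMulVec (psiVec V φ n m p) (star (psiVec V φ n m p))) ∧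
    (∀ n : ℕ, (outState V ρss n).rank ≤ d ^ 2) ∧
    (∀ n : ℕ, ((d : ℝ) ^ 2)⁻¹ ≤ ((outState V ρss n * outState V ρss n).trace).re) :=
  outState_structure_general V ρss h π φ hon hdecomp

end QMCPaper
end
end

section
/- Let V be an isometry defining an irreducible quantum Markov chain with system dimension d and environment dimension k, and let S := { c ∈ ℂ : there exists a unitary d×d matrix W with (W ⊗ 1_k) V = c · V W }. Then: (a) every c ∈ S has |c| = 1, and if (W ⊗ 1_k)V = cVW then T_V(W) = cW; (b) S is exactly the set of eigenvalues of modulus one of the linear map T_V on d×d complex matrices; (c) S is a finite subgroup of the unit circle; (d) for every c ∈ S, the associated unitary is unique up to a phase: if W and W' are unitary with (W ⊗ 1_k)V = cVW and (W' ⊗ 1_k)V = cVW', then W' = e^{iθ} W for some θ ∈ ℝ. (Equivalently, the stabiliser of V under the gauge action (c,W)·V := c̄ (W ⊗ 1_k) V Wᴴ of U(1)×PU(d) is a finite cyclic group.) -/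
open Matrix Filter
open scoped Kronecker ComplexConjugate ComplexOrder

noncomputable section

namespace QMCPaper

/-- The set of phases `c` for which some unitary `W` intertwines `V` with itself:
`(W ⊗ 1_k) V = c · V W`. -/
def gaugeSet {d k : ℕ} (V : Matrix (Fin d × Fin k) (Fin d) ℂ) : Set ℂ :=
  {c : ℂ | ∃ W : Matrix (Fin d) (Fin d) ℂ, IsUnitaryMat W ∧
    (W ⊗ₖ (1 : Matrix (Fin k) (Fin k) ℂ)) * V = c • (V * W)}

end QMCPaper

/-!
Kadison–Schwarz for `T_V(X) = Vᴴ (X ⊗ 1) V`: `T_V(XᴴX) - T_V(X)ᴴ T_V(X) = EᴴE` with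
`E = (X ⊗ 1) V - V T_V(X)`. If `T_V(X) = cX` with `|c| = 1`, this defect has zero expectation in
the faithful stationary state `ρss`, so `E = 0`, i.e. `(X ⊗ 1) V = c V X`. Irreducibility makes
every matrix `Z` commuting with all Kraus operators a scalar: for an eigenvalue `ν` of `Zᴴ`,
`N = Z - ν̄` gives a stationary positive `N ρss Nᴴ` with a kernel, which must be `0`. Applied to
the fixed point `XᴴX` this makes `X` a multiple of a unitary, which is (b); applied to `W' Wᴴ` it
gives (d); finiteness comes from the finite spectrum of `T_V`.
-/

namespace Matrix

variable {l m n : Type*}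

lemma PosDef.eq_zero_of_mul_mul_conjTranspose_eq_zero [Fintype m] [Fintype n]
    {ρ : Matrix n n ℂ} (hρ : ρ.PosDef) {E : Matrix m n ℂ} (h : E * ρ * Eᴴ = 0) : E = 0 := by
  classical
  have hker : ∀ x, Eᴴ *ᵥ x = 0 := fun x => by
    by_contra hx
    have hpos := hρ.dotProduct_mulVec_pos hx
    rw [star_mulVec, conjTranspose_conjTranspose, mulVec_mulVec, dotProduct_mulVec,
      vecMul_vecMul, ← dotProduct_mulVec, ← Matrix.mul_assoc, h, zero_mulVec,
      dotProduct_zero] at hpos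
    exact lt_irrefl 0 hpos
  rw [← conjTranspose_eq_zero]
  ext i j
  simpa [mulVec_single] using congrFun (hker (Pi.single j 1)) i

lemma PosDef.eq_zero_of_trace_mul_conjTranspose_mul_self_eq_zero [Fintype m] [Fintype n]
    {ρ : Matrix n n ℂ} (hρ : ρ.PosDef) {E : Matrix m n ℂ} (h : (ρ * (Eᴴ * E)).trace = 0) :
    E = 0 := by
  refine hρ.eq_zero_of_mul_mul_conjTranspose_eq_zero ?_
  rw [← (hρ.posSemidef.mul_mul_conjTranspose_same E).trace_eq_zero_iff,
    trace_mul_cycle, trace_mul_comm, h]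

lemma conjTranspose_smul_mul_smul_of_norm_eq_one [Fintype l] {c : ℂ} (hc : ‖c‖ = 1)
    (A : Matrix l m ℂ) (B : Matrix l n ℂ) : (c • A)ᴴ * (c • B) = Aᴴ * B := by
  rw [conjTranspose_smul, Matrix.smul_mul, Matrix.mul_smul, smul_smul, Complex.star_def,
    Complex.conj_mul', hc]
  simp

lemma norm_eq_one_of_conjTranspose_mul_self_eq_one [Fintype m] [DecidableEq n] [Nonempty n]
    {A : Matrix m n ℂ} {c : ℂ} (hA : Aᴴ * A = 1) (hcA : (c • A)ᴴ * (c • A) = 1) :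
    ‖c‖ = 1 := by
  rw [conjTranspose_smul, Matrix.smul_mul, Matrix.mul_smul, smul_smul, hA] at hcA
  obtain ⟨i⟩ := ‹Nonempty n›
  have hc : (‖c‖ : ℂ) ^ 2 = 1 := by
    simpa [← Complex.conj_mul'] using congrFun (congrFun hcA i) i
  exact (pow_eq_one_iff_of_nonneg (norm_nonneg c) two_ne_zero).1 (by exact_mod_cast hc)

end Matrix

namespace QMCPaper

variable {d k : ℕ}

lemma kraus_mul (A : Matrix (Fin d × Fin k) (Fin d) ℂ) (M : Matrix (Fin d) (Fin d) ℂ)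
    (j : Fin k) : kraus (A * M) j = kraus A j * M := by
  ext a b
  simp [kraus, blk, Matrix.mul_apply]

lemma kraus_kronecker_one_mul (X : Matrix (Fin d) (Fin d) ℂ)
    (V : Matrix (Fin d × Fin k) (Fin d) ℂ) (j : Fin k) :
    kraus ((X ⊗ₖ (1 : Matrix (Fin k) (Fin k) ℂ)) * V) j = X * kraus V j := by
  ext a b
  simp [kraus, blk, Matrix.mul_apply, Fintype.sum_prod_type, Matrix.one_apply, mul_comm]

lemma conjTranspose_mul_eq_sum_kraus (A B : Matrix (Fin d × Fin k) (Fin d) ℂ) :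
    Aᴴ * B = ∑ j, (kraus A j)ᴴ * kraus B j := by
  ext b b'
  simp only [Matrix.mul_apply, Matrix.sum_apply, kraus, blk, Matrix.conjTranspose_apply,
    Fintype.sum_prod_type]
  exact Finset.sum_comm

lemma chan_eq (V : Matrix (Fin d × Fin k) (Fin d) ℂ) (X : Matrix (Fin d) (Fin d) ℂ) :
    chan V X = Vᴴ * ((X ⊗ₖ (1 : Matrix (Fin k) (Fin k) ℂ)) * V) := by
  simp only [conjTranspose_mul_eq_sum_kraus, kraus_kronecker_one_mul, chan, Matrix.mul_assoc]

lemma trace_mul_chan (V : Matrix (Fin d × Fin k) (Fin d) ℂ) (ρ Y : Matrix (Fin d) (Fin d) ℂ) :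
    (ρ * chan V Y).trace = (predual V ρ * Y).trace := by
  simp only [chan, predual, Matrix.mul_sum, Matrix.sum_mul, Matrix.trace_sum]
  refine Finset.sum_congr rfl fun j _ => ?_
  rw [Matrix.trace_mul_comm ρ, Matrix.mul_assoc (kraus V j * ρ),
    Matrix.trace_mul_comm (kraus V j * ρ)]
  simp only [Matrix.mul_assoc]

lemma chan_conjTranspose_mul_self (V : Matrix (Fin d × Fin k) (Fin d) ℂ)
    (X : Matrix (Fin d) (Fin d) ℂ) :
    chan V (Xᴴ * X) = ((X ⊗ₖ (1 : Matrix (Fin k) (Fin k) ℂ)) * V)ᴴ *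
      ((X ⊗ₖ (1 : Matrix (Fin k) (Fin k) ℂ)) * V) := by
  rw [chan_eq, Matrix.conjTranspose_mul, Matrix.conjTranspose_kronecker, Matrix.conjTranspose_one,
    Matrix.mul_assoc, ← Matrix.mul_assoc (Xᴴ ⊗ₖ _), ← Matrix.mul_kronecker_mul, Matrix.one_mul]

lemma chan_conjTranspose_mul_self_sub {V : Matrix (Fin d × Fin k) (Fin d) ℂ} (hV : Vᴴ * V = 1)
    (X : Matrix (Fin d) (Fin d) ℂ) :
    chan V (Xᴴ * X) - (chan V X)ᴴ * chan V X =
      ((X ⊗ₖ (1 : Matrix (Fin k) (Fin k) ℂ)) * V - V * chan V X)ᴴ *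
        ((X ⊗ₖ (1 : Matrix (Fin k) (Fin k) ℂ)) * V - V * chan V X) := by
  have hVV (M : Matrix (Fin d) (Fin d) ℂ) : Vᴴ * (V * M) = M := by
    rw [← Matrix.mul_assoc, hV, Matrix.one_mul]
  rw [chan_conjTranspose_mul_self, chan_eq]
  generalize (X ⊗ₖ (1 : Matrix (Fin k) (Fin k) ℂ)) * V = A
  simp only [Matrix.conjTranspose_sub, Matrix.conjTranspose_mul, Matrix.sub_mul, Matrix.mul_sub,
    Matrix.conjTranspose_conjTranspose, Matrix.mul_assoc, hVV]
  abel

lemma isUnitaryMat_iff_mem_unitary {W : Matrix (Fin d) (Fin d) ℂ} :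
    IsUnitaryMat W ↔ W ∈ unitary (Matrix (Fin d) (Fin d) ℂ) :=
  Iff.rfl

lemma IsUnitaryMat.mul {W W' : Matrix (Fin d) (Fin d) ℂ} (hW : IsUnitaryMat W)
    (hW' : IsUnitaryMat W') : IsUnitaryMat (W * W') :=
  isUnitaryMat_iff_mem_unitary.2 (Submonoid.mul_mem _ hW hW')

lemma IsUnitaryMat.conjTranspose {W : Matrix (Fin d) (Fin d) ℂ} (hW : IsUnitaryMat W) :
    IsUnitaryMat Wᴴ :=
  Unitary.star_mem hW

lemma IsUnitaryMat.ne_zero [NeZero d] {W : Matrix (Fin d) (Fin d) ℂ} (hW : IsUnitaryMat W) :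
    W ≠ 0 := by
  rintro rfl
  simpa using hW.1

lemma exists_isUnitaryMat_smul {X : Matrix (Fin d) (Fin d) ℂ} {μ : ℂ} (hX : X ≠ 0)
    (hXX : Xᴴ * X = μ • 1) : ∃ s : ℂ, IsUnitaryMat (s • X) := by
  obtain ⟨i, -, -⟩ : ∃ i j, X i j ≠ 0 := by
    by_contra! h
    exact hX (Matrix.ext h)
  have hμ0 : 0 ≤ μ := by
    simpa [hXX] using (Matrix.posSemidef_conjTranspose_mul_self X).diag_nonneg (i := i)
  have hμne : μ ≠ 0 := fun h0 => hX (by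
    rw [← Matrix.conjTranspose_mul_self_eq_zero, hXX, h0, zero_smul])
  obtain ⟨r, hr, rfl⟩ : ∃ r : ℝ, 0 < r ∧ (r : ℂ) = μ := by
    obtain ⟨hre, him⟩ := Complex.pos_iff.1 (lt_of_le_of_ne hμ0 (Ne.symm hμne))
    exact ⟨μ.re, hre, Complex.ext rfl (by simp [him])⟩
  refine ⟨((√r)⁻¹ : ℝ), ?_⟩
  have hWW : ((((√r)⁻¹ : ℝ) : ℂ) • X)ᴴ * ((((√r)⁻¹ : ℝ) : ℂ) • X) = 1 := by
    rw [Matrix.conjTranspose_smul, Matrix.smul_mul, Matrix.mul_smul, smul_smul, hXX, smul_smul]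
    have hr' : (√r)⁻¹ * (√r)⁻¹ * r = 1 := by
      rw [← mul_inv, Real.mul_self_sqrt hr.le, inv_mul_cancel₀ hr.ne']
    rw [Complex.star_def, Complex.conj_ofReal, ← Complex.ofReal_mul, ← Complex.ofReal_mul, hr',
      Complex.ofReal_one, one_smul]
  exact ⟨hWW, mul_eq_one_comm.1 hWW⟩

def Intertwines (V : Matrix (Fin d × Fin k) (Fin d) ℂ) (c : ℂ) (W : Matrix (Fin d) (Fin d) ℂ) :
    Prop :=
  (W ⊗ₖ (1 : Matrix (Fin k) (Fin k) ℂ)) * V = c • (V * W)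

namespace Intertwines

variable {V : Matrix (Fin d × Fin k) (Fin d) ℂ} {c c' : ℂ} {W W' : Matrix (Fin d) (Fin d) ℂ}

lemma one : Intertwines V 1 1 := by
  simp [Intertwines]

lemma mul (h : Intertwines V c W) (h' : Intertwines V c' W') :
    Intertwines V (c * c') (W * W') := by
  rw [Intertwines, ← Matrix.one_mul (1 : Matrix (Fin k) (Fin k) ℂ), Matrix.mul_kronecker_mul,
    Matrix.mul_assoc, h', Matrix.mul_smul, ← Matrix.mul_assoc, h, Matrix.smul_mul, smul_smul,
    Matrix.mul_assoc, mul_comm c']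

lemma smul (h : Intertwines V c W) (s : ℂ) : Intertwines V c (s • W) := by
  rw [Intertwines, Matrix.smul_kronecker, Matrix.smul_mul, h, Matrix.mul_smul, smul_comm]

lemma conjTranspose (h : Intertwines V c W) (hW : IsUnitaryMat W) (hc : c ≠ 0) :
    Intertwines V c⁻¹ Wᴴ := by
  have hV : V = c • ((Wᴴ ⊗ₖ (1 : Matrix (Fin k) (Fin k) ℂ)) * V * W) := by
    rw [Matrix.mul_assoc, ← Matrix.mul_smul, ← h, ← Matrix.mul_assoc, ← Matrix.mul_kronecker_mul,
      hW.1, Matrix.one_mul, Matrix.one_kronecker_one, Matrix.one_mul]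
  rw [Intertwines]
  conv_rhs => rw [hV]
  rw [Matrix.smul_mul, Matrix.mul_assoc _ W, hW.2, Matrix.mul_one, smul_smul, inv_mul_cancel₀ hc,
    one_smul]

lemma chan_eq (hV : Vᴴ * V = 1) (h : Intertwines V c W) : chan V W = c • W := by
  rw [QMCPaper.chan_eq, h, Matrix.mul_smul, ← Matrix.mul_assoc, hV, Matrix.one_mul]

lemma norm_eq_one [NeZero d] (hV : Vᴴ * V = 1) (hW : Wᴴ * W = 1) (h : Intertwines V c W) :
    ‖c‖ = 1 := by
  refine Matrix.norm_eq_one_of_conjTranspose_mul_self_eq_one (A := V * W) ?_ ?_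
  · rw [Matrix.conjTranspose_mul, Matrix.mul_assoc, ← Matrix.mul_assoc Vᴴ, hV, Matrix.one_mul, hW]
  · rw [← h, Matrix.conjTranspose_mul, Matrix.conjTranspose_kronecker, Matrix.conjTranspose_one,
      Matrix.mul_assoc, ← Matrix.mul_assoc (Wᴴ ⊗ₖ _), ← Matrix.mul_kronecker_mul, hW,
      Matrix.one_mul, Matrix.one_kronecker_one, Matrix.one_mul, hV]

lemma ne_zero [NeZero d] (hV : Vᴴ * V = 1) (hW : Wᴴ * W = 1) (h : Intertwines V c W) : c ≠ 0 :=
  norm_ne_zero_iff.1 (by rw [h.norm_eq_one hV hW]; exact one_ne_zero)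

lemma commute_kraus (h : Intertwines V 1 W) (j : Fin k) : W * kraus V j = kraus V j * W := by
  rw [← kraus_kronecker_one_mul, h, one_smul, kraus_mul]

lemma chan_conjTranspose_mul_self (hV : Vᴴ * V = 1) (hc : ‖c‖ = 1) (h : Intertwines V c W) :
    chan V (Wᴴ * W) = Wᴴ * W := by
  rw [QMCPaper.chan_conjTranspose_mul_self, h,
    Matrix.conjTranspose_smul_mul_smul_of_norm_eq_one hc, Matrix.conjTranspose_mul,
    Matrix.mul_assoc, ← Matrix.mul_assoc Vᴴ, hV, Matrix.one_mul]

end Intertwines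

def chanLinearMap (V : Matrix (Fin d × Fin k) (Fin d) ℂ) :
    Module.End ℂ (Matrix (Fin d) (Fin d) ℂ) where
  toFun := chan V
  map_add' _ _ := by simp [chan, Matrix.mul_add, Matrix.add_mul, Finset.sum_add_distrib]
  map_smul' _ _ := by simp [chan, Finset.smul_sum]

lemma finite_setOf_chan_eq_smul (V : Matrix (Fin d × Fin k) (Fin d) ℂ) :
    {c : ℂ | ∃ X : Matrix (Fin d) (Fin d) ℂ, X ≠ 0 ∧ chan V X = c • X}.Finite :=
  (Module.End.finite_hasEigenvalue (chanLinearMap V)).subset fun _ ⟨_, hX0, hX⟩ =>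
    Module.End.hasEigenvalue_of_hasEigenvector ⟨Module.End.mem_eigenspace_iff.2 hX, hX0⟩

lemma predual_smul (V : Matrix (Fin d × Fin k) (Fin d) ℂ) (s : ℂ)
    (ρ : Matrix (Fin d) (Fin d) ℂ) : predual V (s • ρ) = s • predual V ρ := by
  simp [predual, Finset.smul_sum]

lemma predual_mul_mul_conjTranspose {V : Matrix (Fin d × Fin k) (Fin d) ℂ}
    {N : Matrix (Fin d) (Fin d) ℂ} (hN : ∀ j, N * kraus V j = kraus V j * N)
    (ρ : Matrix (Fin d) (Fin d) ℂ) :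
    predual V (N * ρ * Nᴴ) = N * predual V ρ * Nᴴ := by
  have hN' (j : Fin k) : (kraus V j)ᴴ * Nᴴ = Nᴴ * (kraus V j)ᴴ := by
    rw [← Matrix.conjTranspose_mul, hN, Matrix.conjTranspose_mul]
  simp only [predual, Matrix.mul_sum, Matrix.sum_mul]
  refine Finset.sum_congr rfl fun j _ => ?_
  simp only [← Matrix.mul_assoc]
  rw [← hN, Matrix.mul_assoc _ Nᴴ, ← hN']
  simp only [Matrix.mul_assoc]

namespace IsIrreducible

variable {V : Matrix (Fin d × Fin k) (Fin d) ℂ} {ρss : Matrix (Fin d) (Fin d) ℂ}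

lemma neZero (h : IsIrreducible V ρss) : NeZero d := by
  refine ⟨fun hd => ?_⟩
  subst hd
  simpa using h.2.1.2

lemma eq_zero_of_predual_eq_self_of_mulVec_eq_zero (h : IsIrreducible V ρss)
    {σ : Matrix (Fin d) (Fin d) ℂ} (hσ : σ.PosSemidef) (hσV : predual V σ = σ) {w : Fin d → ℂ} (hw : w ≠ 0)
    (hσw : σ *ᵥ w = 0) : σ = 0 := by
  obtain ⟨-, -, -, hρ, huniq⟩ := h
  -- otherwise `σ / tr σ` would be a stationary state, hence `ρss`, with a kernel
  by_contra hσ0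
  have ht : 0 < σ.trace :=
    lt_of_le_of_ne hσ.trace_nonneg (Ne.symm (mt hσ.trace_eq_zero_iff.1 hσ0))
  have hstate : IsState (σ.trace⁻¹ • σ) :=
    ⟨hσ.smul (RCLike.inv_pos.2 ht).le,
      by rw [Matrix.trace_smul, smul_eq_mul, inv_mul_cancel₀ ht.ne']⟩
  have hρw := hρ.dotProduct_mulVec_pos hw
  rw [← huniq _ hstate (by rw [predual_smul, hσV]), Matrix.smul_mulVec, hσw, smul_zero,
    dotProduct_zero] at hρw
  exact lt_irrefl 0 hρw

lemma eq_smul_one_of_commute_kraus (h : IsIrreducible V ρss) {Z : Matrix (Fin d) (Fin d) ℂ}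
    (hZ : ∀ j, Z * kraus V j = kraus V j * Z) : ∃ μ : ℂ, Z = μ • 1 := by
  have := h.neZero
  have ⟨_, _, hρV, hρ, _⟩ := h
  obtain ⟨ν, hν⟩ := Module.End.exists_eigenvalue (Matrix.toLin' Zᴴ)
  obtain ⟨w, hw⟩ := hν.exists_hasEigenvector
  refine ⟨star ν, sub_eq_zero.1 (hρ.eq_zero_of_mul_mul_conjTranspose_eq_zero ?_)⟩
  set N := Z - star ν • 1
  have hN (j : Fin k) : N * kraus V j = kraus V j * N := by
    simp only [N, Matrix.sub_mul, Matrix.mul_sub, hZ j, Matrix.smul_mul, Matrix.mul_smul,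
      Matrix.one_mul, Matrix.mul_one]
  have hNw : Nᴴ *ᵥ w = 0 := by
    have := hw.apply_eq_smul
    simp only [N, Matrix.conjTranspose_sub, Matrix.conjTranspose_smul, Matrix.conjTranspose_one,
      star_star, Matrix.sub_mulVec, Matrix.smul_mulVec, Matrix.one_mulVec]
    rw [← Matrix.toLin'_apply, this, sub_self]
  refine h.eq_zero_of_predual_eq_self_of_mulVec_eq_zero
    (hρ.posSemidef.mul_mul_conjTranspose_same N) (by rw [predual_mul_mul_conjTranspose hN, hρV])
    hw.2 ?_
  rw [← Matrix.mulVec_mulVec, hNw, Matrix.mulVec_zero]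

lemma intertwines_of_chan_eq_smul (h : IsIrreducible V ρss) {c : ℂ}
    {X : Matrix (Fin d) (Fin d) ℂ} (hc : ‖c‖ = 1) (hX : chan V X = c • X) :
    Intertwines V c X := by
  obtain ⟨hV, -, hρV, hρ, -⟩ := h
  have hXX : (chan V X)ᴴ * chan V X = Xᴴ * X := by
    rw [hX, Matrix.conjTranspose_smul_mul_smul_of_norm_eq_one hc]
  have hdefect := hρ.eq_zero_of_trace_mul_conjTranspose_mul_self_eq_zero <| by
    rw [← chan_conjTranspose_mul_self_sub hV X, hXX, Matrix.mul_sub, Matrix.trace_sub,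
      trace_mul_chan, hρV, sub_self]
  rw [Intertwines, sub_eq_zero.1 hdefect, hX, Matrix.mul_smul]

lemma eq_smul_one_of_chan_eq_self (h : IsIrreducible V ρss) {Z : Matrix (Fin d) (Fin d) ℂ}
    (hZ : chan V Z = Z) : ∃ μ : ℂ, Z = μ • 1 :=
  h.eq_smul_one_of_commute_kraus
    (h.intertwines_of_chan_eq_smul norm_one (by rw [one_smul, hZ])).commute_kraus

lemma gaugeSet_eq (h : IsIrreducible V ρss) :
    gaugeSet V =
      {c : ℂ | ‖c‖ = 1 ∧ ∃ X : Matrix (Fin d) (Fin d) ℂ, X ≠ 0 ∧ chan V X = c • X} := by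
  have := h.neZero
  ext c
  constructor
  · rintro ⟨W, hW, hWc : Intertwines V c W⟩
    exact ⟨hWc.norm_eq_one h.1 hW.1, W, hW.ne_zero, hWc.chan_eq h.1⟩
  · rintro ⟨hc, X, hX0, hX⟩
    have hXc := h.intertwines_of_chan_eq_smul hc hX
    obtain ⟨μ, hμ⟩ := h.eq_smul_one_of_chan_eq_self (hXc.chan_conjTranspose_mul_self h.1 hc)
    obtain ⟨s, hs⟩ := exists_isUnitaryMat_smul hX0 hμ
    exact ⟨s • X, hs, hXc.smul s⟩

lemma finite_gaugeSet (h : IsIrreducible V ρss) : (gaugeSet V).Finite := by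
  rw [h.gaugeSet_eq]
  exact (finite_setOf_chan_eq_smul V).subset fun _ hc => hc.2

lemma inv_mem_gaugeSet (h : IsIrreducible V ρss) {c : ℂ} (hc : c ∈ gaugeSet V) :
    c⁻¹ ∈ gaugeSet V := by
  have := h.neZero
  obtain ⟨W, hW, hWc : Intertwines V c W⟩ := hc
  exact ⟨Wᴴ, hW.conjTranspose, hWc.conjTranspose hW (hWc.ne_zero h.1 hW.1)⟩

lemma exists_eq_exp_smul_of_intertwines (h : IsIrreducible V ρss) {c : ℂ}
    {W W' : Matrix (Fin d) (Fin d) ℂ} (hW : IsUnitaryMat W) (hW' : IsUnitaryMat W')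
    (hWc : Intertwines V c W) (hW'c : Intertwines V c W') :
    ∃ θ : ℝ, W' = Complex.exp (θ * Complex.I) • W := by
  have := h.neZero
  have hc0 := hWc.ne_zero h.1 hW.1
  have hU : Intertwines V 1 (W' * Wᴴ) := by
    simpa [hc0] using hW'c.mul (hWc.conjTranspose hW hc0)
  obtain ⟨μ, hμ⟩ := h.eq_smul_one_of_commute_kraus hU.commute_kraus
  have hW'W : W' = μ • W := by
    rw [← Matrix.one_mul W, ← Matrix.smul_mul, ← hμ, Matrix.mul_assoc, hW.1, Matrix.mul_one]
  obtain ⟨θ, hθ⟩ := (Complex.norm_eq_one_iff μ).1 <|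
    Matrix.norm_eq_one_of_conjTranspose_mul_self_eq_one hW.1 (hW'W ▸ hW'.1)
  exact ⟨θ, hθ ▸ hW'W⟩

end IsIrreducible

lemma one_mem_gaugeSet (V : Matrix (Fin d × Fin k) (Fin d) ℂ) : (1 : ℂ) ∈ gaugeSet V :=
  ⟨1, ⟨by simp, by simp⟩, Intertwines.one⟩

lemma mul_mem_gaugeSet {V : Matrix (Fin d × Fin k) (Fin d) ℂ} {c c' : ℂ} (hc : c ∈ gaugeSet V)
    (hc' : c' ∈ gaugeSet V) : c * c' ∈ gaugeSet V :=
  let ⟨W, hW, hWc⟩ := hc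
  let ⟨W', hW', hW'c⟩ := hc'
  ⟨W * W', hW.mul hW', Intertwines.mul hWc hW'c⟩

/-- Theorem: the stabiliser of an irreducible QMC. -/
theorem stabiliser_structure {d k : ℕ}
    (V : Matrix (Fin d × Fin k) (Fin d) ℂ) (ρss : Matrix (Fin d) (Fin d) ℂ)
    (h : IsIrreducible V ρss) :
    -- (a) every `c` in the set has modulus one, and the intertwining relation forces
    -- `T_V(W) = c W`
    (∀ c ∈ gaugeSet V, ‖c‖ = 1) ∧
    (∀ (c : ℂ) (W : Matrix (Fin d) (Fin d) ℂ), IsUnitaryMat W →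
      (W ⊗ₖ (1 : Matrix (Fin k) (Fin k) ℂ)) * V = c • (V * W) →
      chan V W = c • W) ∧
    -- (b) the set is exactly the set of peripheral eigenvalues of `T_V`
    (gaugeSet V = {c : ℂ | ‖c‖ = 1 ∧
      ∃ X : Matrix (Fin d) (Fin d) ℂ, X ≠ 0 ∧ chan V X = c • X}) ∧
    -- (c) it is a finite subgroup of the unit circle
    (gaugeSet V).Finite ∧ (1 : ℂ) ∈ gaugeSet V ∧
    (∀ c ∈ gaugeSet V, ∀ c' ∈ gaugeSet V, c * c' ∈ gaugeSet V) ∧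
    (∀ c ∈ gaugeSet V, c⁻¹ ∈ gaugeSet V) ∧
    -- (d) for every `c`, the associated unitary is unique up to a phase
    (∀ (c : ℂ) (W W' : Matrix (Fin d) (Fin d) ℂ),
      IsUnitaryMat W → IsUnitaryMat W' →
      (W ⊗ₖ (1 : Matrix (Fin k) (Fin k) ℂ)) * V = c • (V * W) →
      (W' ⊗ₖ (1 : Matrix (Fin k) (Fin k) ℂ)) * V = c • (V * W') →
      ∃ θ : ℝ, W' = Complex.exp (θ * Complex.I) • W) := by
  exact ⟨fun _ hc => (h.gaugeSet_eq.subset hc).1, fun _ _ _ hWc => Intertwines.chan_eq h.1 hWc,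
    h.gaugeSet_eq, h.finite_gaugeSet, one_mem_gaugeSet V, fun _ hc _ hc' => mul_mem_gaugeSet hc hc',
    fun _ hc => h.inv_mem_gaugeSet hc,
    fun _ _ _ hW hW' hWc hW'c => h.exists_eq_exp_smul_of_intertwines hW hW' hWc hW'c⟩

end QMCPaper
end
end
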